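/- arXiv:math/0411058 — 2 statements merged into one kernel-verified Lean document; each statement's English description precedes it below -/
import Mathlib

section
/- Consider the foliation of the punctured plane M = ℝ² \ {0} by circles centered at the origin, and the ℝ-action R_h(x) = e^{ih/|x|}·x (rotation of x by angle h/|x|), whose orbits are these circles. There is no smooth line field on M transverse to the circles that is invariant under this action; concretely, if v(x) is a nonzero vector transverse to the circle through x, then for h in the isotropy group {h : R_h x = x} = 2π|x|ℤ with h ≠ 0, the differential d(R_h)ₓ v(x) is not collinear with v(x), because d/dr (e^{ih/r}) = -(ih/r²) e^{ih/r} ≠ 0. -/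
open Real

/-- for the ℝ-action `R_h x = e^{ih/|x|}·x` on the punctured plane
`ℂ \ {0}` (whose orbits are circles about the origin), no transverse direction
is preserved by the nontrivial isotropy elements `h ∈ 2π|x|ℤ, h ≠ 0`: the
differential of `R_h` at `x` applied to a vector `v` transverse to the circle
through `x` is never collinear with `v`.  In particular there is no invariant
transverse line field. -/
theorem no_invariant_transversal_punctured_plane
    (x v : ℂ) (hx : x ≠ 0) (hv : v ≠ 0)
    (htrans : ¬∃ c : ℝ, v = c • (Complex.I * x))
    (k : ℤ) (hk : k ≠ 0) (h : ℝ) (hh : h = 2 * π * ‖x‖ * k) :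
    ¬∃ c : ℝ,
      fderiv ℝ (fun y : ℂ => Complex.exp (Complex.I * ((h : ℂ) / (‖y‖ : ℂ))) * y) x v
        = c • v := by
  have hxn : ‖x‖ ≠ 0 := norm_ne_zero_iff.mpr hx
  have hxp : (0:ℝ) < ‖x‖ := norm_pos_iff.mpr hx
  -- derivative of the norm
  have hsq : HasFDerivAt (fun y : ℂ => ‖y‖ ^ 2) (2 • innerSL ℝ x) x :=
    (hasStrictFDerivAt_norm_sq x).hasFDerivAt
  have hsqrt : HasDerivAt Real.sqrt (1 / (2 * Real.sqrt (‖x‖ ^ 2))) (‖x‖ ^ 2) :=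
    Real.hasDerivAt_sqrt (by positivity)
  have hnorm : HasFDerivAt (fun y : ℂ => ‖y‖)
      ((1 / (2 * Real.sqrt (‖x‖ ^ 2))) • (2 • innerSL ℝ x)) x := by
    have key : (fun y : ℂ => ‖y‖) = (Real.sqrt ∘ fun y : ℂ => ‖y‖ ^ 2) := by
      funext y; simp [Function.comp, Real.sqrt_sq, norm_nonneg]
    rw [key]
    exact hsqrt.comp_hasFDerivAt x hsq
  -- coerce to ℂ
  have hnormC : HasFDerivAt (fun y : ℂ => ((‖y‖ : ℝ) : ℂ))
      (Complex.ofRealCLM.comp ((1 / (2 * Real.sqrt (‖x‖ ^ 2))) • (2 • innerSL ℝ x))) x :=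
    Complex.ofRealCLM.hasFDerivAt.comp x hnorm
  have hne : ((‖x‖ : ℝ) : ℂ) ≠ 0 := by exact_mod_cast hxn
  have hinv : HasFDerivAt (fun y : ℂ => (((‖y‖ : ℝ) : ℂ))⁻¹)
      ((-(((‖x‖:ℝ):ℂ) ^ 2)⁻¹) •
        (Complex.ofRealCLM.comp ((1 / (2 * Real.sqrt (‖x‖ ^ 2))) • (2 • innerSL ℝ x)))) x := by
    have := (hasDerivAt_inv hne).comp_hasFDerivAt x hnormC
    simpa [Function.comp_def] using this
  set L := ((-(((‖x‖:ℝ):ℂ) ^ 2)⁻¹) •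
        (Complex.ofRealCLM.comp ((1 / (2 * Real.sqrt (‖x‖ ^ 2))) • (2 • innerSL ℝ x)))) with hL
  have hg : HasFDerivAt (fun y : ℂ => Complex.I * ((h:ℂ) * (((‖y‖ : ℝ) : ℂ))⁻¹))
      (Complex.I • ((h:ℂ) • L)) x := (hinv.const_mul ((h:ℂ))).const_mul Complex.I
  have hexp := hg.cexp
  have hfull := hexp.mul (hasFDerivAt_id x)
  -- exp at x is 1
  have hgx : Complex.exp (Complex.I * ((h:ℂ) * (((‖x‖ : ℝ) : ℂ))⁻¹)) = 1 := by
    have : Complex.I * ((h:ℂ) * (((‖x‖ : ℝ) : ℂ))⁻¹) = (k:ℂ) * (2 * π * Complex.I) := by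
      have hA : ((‖x‖ : ℝ) : ℂ) ≠ 0 := by
        exact hne
      have hAA : ((‖x‖ : ℝ) : ℂ) * ((‖x‖ : ℝ) : ℂ)⁻¹ = 1 :=
        mul_inv_cancel₀ hA
      rw [hh]; push_cast
      linear_combination (Complex.I * (π:ℂ) * (k:ℂ) * 2) * hAA
    rw [this, Complex.exp_int_mul_two_pi_mul_I]
  -- rewrite the target function
  have feq : (fun y : ℂ => Complex.exp (Complex.I * ((h : ℂ) / (‖y‖ : ℂ))) * y)
      = (fun y : ℂ => Complex.exp (Complex.I * ((h:ℂ) * (((‖y‖ : ℝ) : ℂ))⁻¹)) * y) := by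
    funext y; rw [div_eq_mul_inv]
  simp only [id_eq, Pi.mul_def] at hfull
  rw [feq, hfull.fderiv]
  -- evaluate the derivative at v
  rintro ⟨c, hc⟩
  simp only [ContinuousLinearMap.add_apply, ContinuousLinearMap.smul_apply,
    ContinuousLinearMap.coe_comp', Function.comp_apply, ContinuousLinearMap.coe_id',
    hgx, innerSL_apply_apply, hL, id_eq, one_smul, smul_eq_mul] at hc
  set inn : ℝ := inner ℝ x v with hinn
  set t : ℝ := -(h * inn / ‖x‖ ^ 3) with ht
  have hCx : ((‖x‖ : ℝ) : ℂ) ≠ 0 := hne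
  have hrew : x * (Complex.I *
      ((h:ℂ) * (-((((‖x‖:ℝ):ℂ)) ^ 2)⁻¹ * Complex.ofRealCLM (1 / (2 * √(‖x‖ ^ 2)) * 2 • inn))))
      = (t:ℂ) * (Complex.I * x) := by
    have hs : √(‖x‖ ^ 2) = ‖x‖ := Real.sqrt_sq (norm_nonneg x)
    simp only [hs, Complex.ofRealCLM_apply, smul_eq_mul, ht]
    push_cast
    field_simp
    ring
  rw [hrew] at hc
  have hc' : v + (t:ℂ) * (Complex.I * x) = (c:ℂ) * v := by
    rw [hc, Complex.real_smul]
  have hIx : Complex.I * x ≠ 0 := mul_ne_zero Complex.I_ne_zero hx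
  by_cases hc1 : c = 1
  · subst hc1
    have ht0 : (t:ℂ) * (Complex.I * x) = 0 := by
      push_cast at hc'; linear_combination hc'
    have ht0' : t = 0 := by
      rcases mul_eq_zero.mp ht0 with h0 | h0
      · exact_mod_cast h0
      · exact absurd h0 hIx
    have hh0 : h ≠ 0 := by
      rw [hh]
      have : (0:ℝ) < ‖x‖ := by
        simpa using hxp
      have hk' : (k:ℝ) ≠ 0 := Int.cast_ne_zero.mpr hk
      positivity
    have hinn0 : inn = 0 := by
      have h3 : ‖x‖ ^ 3 ≠ 0 := pow_ne_zero _ hxn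
      have hmul : h * inn = 0 := by
        have h4 := ht0'
        rw [ht, neg_eq_zero, div_eq_zero_iff] at h4
        tauto
      rcases mul_eq_zero.mp hmul with h0 | h0
      · exact absurd h0 hh0
      · exact h0
    -- inn = 0 means v ⊥ x, so v is parallel to I * x
    have hinn' : x.re * v.re + x.im * v.im = 0 := by
      have : inn = x.re * v.re + x.im * v.im := by
        rw [hinn, Complex.inner]
        simp [Complex.mul_re]; ring
      linarith [this ▸ hinn0]
    have hns : x.re ^ 2 + x.im ^ 2 ≠ 0 := by
      have := Complex.normSq_pos.mpr hx
      rw [Complex.normSq_apply] at this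
      nlinarith
    refine htrans ⟨(x.re * v.im - x.im * v.re) / (x.re ^ 2 + x.im ^ 2), ?_⟩
    apply Complex.ext
    · simp only [Complex.real_smul, Complex.mul_re, Complex.mul_im,
        Complex.ofReal_re, Complex.ofReal_im, Complex.I_re, Complex.I_im]
      field_simp
      linear_combination x.re * hinn'
    · simp only [Complex.real_smul, Complex.mul_re, Complex.mul_im,
        Complex.ofReal_re, Complex.ofReal_im, Complex.I_re, Complex.I_im]
      field_simp
      linear_combination x.im * hinn'
  · have hcne : (c:ℂ) - 1 ≠ 0 := by
      intro h0
      apply hc1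
      have : (c:ℂ) = 1 := by linear_combination h0
      exact_mod_cast this
    refine htrans ⟨(c - 1)⁻¹ * t, ?_⟩
    rw [Complex.real_smul]
    push_cast
    rw [eq_comm, mul_assoc, inv_mul_eq_iff_eq_mul₀ hcne]
    linear_combination hc'
end

section
/- Let f : S¹ → S¹ be rotation by an angle irrationally related to 2π, fix x ∈ S¹, and for ε > 0 and N ∈ ℕ let N₁(ε, N) be the number of integers n ∈ [0, N] with fⁿ(x) in the ε-ball around a fixed point z ∈ S¹. Then the frequency ν_ε(z) = lim_{N→∞} N₁(ε, N)/N exists and equals the normalized length of the ε-ball, namely ε/π (for ε < π, measuring S¹ with total length 2π). -/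
/-
Weyl's argument. For a character `e_k` with `k ≠ 0`, the Birkhoff sums of `e_k` along
`x + m • a` are geometric sums with ratio `e_k a ≠ 1`, hence bounded, so their averages tend to
`0 = ∫ e_k`. The averages are `1`-Lipschitz in the observable, so the continuous functions whose
averages converge to their integral form a closed subspace; it contains the span of the
characters, which is dense. Hence the empirical measures of the orbit converge weakly to Haar
measure, and the portmanteau theorem yields convergence of the visit frequencies of a ball, whose
boundary is null.
-/

open Real Filter
open scoped Classical
open Topology MeasureTheory Finset ENNReal BoundedContinuousFunction

section OrbitMeasure

variable {Ω : Type*} [MeasurableSpace Ω]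

noncomputable def orbitMeasure (f : Ω → Ω) (x : Ω) (n : ℕ) : Measure Ω :=
  (n : ℝ≥0∞)⁻¹ • ∑ m ∈ range n, Measure.dirac (f^[m] x)

variable [MeasurableSingletonClass Ω]

lemma orbitMeasure_apply (f : Ω → Ω) (x : Ω) (n : ℕ) (s : Set Ω) :
    orbitMeasure f x n s = #{m ∈ range n | f^[m] x ∈ s} / n := by
  simp only [orbitMeasure, Measure.smul_apply, Measure.finsetSum_apply, Measure.dirac_apply,
    Set.indicator_apply, Pi.one_apply, sum_boole, smul_eq_mul, ENNReal.div_eq_inv_mul]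

lemma isProbabilityMeasure_orbitMeasure (f : Ω → Ω) (x : Ω) {n : ℕ} (hn : n ≠ 0) :
    IsProbabilityMeasure (orbitMeasure f x n) := by
  constructor
  rw [orbitMeasure_apply]
  simp [ENNReal.div_self, hn]

lemma integral_orbitMeasure {E : Type*} [NormedAddCommGroup E] [NormedSpace ℝ E] [CompleteSpace E]
    (f : Ω → Ω) (x : Ω) (n : ℕ) (g : Ω → E) :
    ∫ y, g y ∂orbitMeasure f x n = birkhoffAverage ℝ f g n x := by
  rw [orbitMeasure, integral_smul_measure, integral_finsetSum_measure
    fun m _ ↦ integrable_dirac enorm_lt_top]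
  simp only [integral_dirac, birkhoffAverage, birkhoffSum, ENNReal.toReal_inv,
    ENNReal.toReal_natCast]

theorem tendsto_card_filter_iterate_mem_div [TopologicalSpace Ω] [OpensMeasurableSpace Ω]
    [HasOuterApproxClosed Ω] {f : Ω → Ω} {x : Ω} {μ : Measure Ω} [IsProbabilityMeasure μ]
    (h : ∀ g : Ω →ᵇ ℂ, Tendsto (birkhoffAverage ℂ f g · x) atTop (𝓝 (∫ y, g y ∂μ)))
    {s : Set Ω} (hs : μ (frontier s) = 0) :
    Tendsto (fun n : ℕ ↦ (#{m ∈ range n | f^[m] x ∈ s} : ℝ) / n) atTop (𝓝 (μ.real s)) := by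
  let ν : ℕ → ProbabilityMeasure Ω := fun n ↦
    ⟨orbitMeasure f x (n + 1), isProbabilityMeasure_orbitMeasure f x n.succ_ne_zero⟩
  have hν : Tendsto ν atTop (𝓝 ⟨μ, ‹_›⟩) := by
    refine (ProbabilityMeasure.tendsto_iff_forall_integral_rclike_tendsto ℂ).2 fun g ↦ ?_
    simp only [ν, ProbabilityMeasure.coe_mk, integral_orbitMeasure,
      birkhoffAverage_congr_ring' ℝ ℂ]
    exact (h g).comp (tendsto_add_atTop_nat 1)
  rw [← tendsto_add_atTop_iff_nat 1]
  refine ((ENNReal.tendsto_toReal (measure_ne_top μ s)).comp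
    (ProbabilityMeasure.tendsto_measure_of_null_frontier_of_tendsto' hν hs)).congr fun n ↦ ?_
  simp [ν, orbitMeasure_apply, ENNReal.toReal_div, ENNReal.toReal_add]

end OrbitMeasure

lemma norm_birkhoffAverage_le {α E : Type*} (𝕜 : Type*) [RCLike 𝕜] [SeminormedAddCommGroup E]
    [NormedSpace 𝕜 E] {f : α → α} {g : α → E} {C : ℝ} (hg : ∀ y, ‖g y‖ ≤ C) (n : ℕ) (x : α) :
    ‖birkhoffAverage 𝕜 f g n x‖ ≤ C := by
  rcases eq_or_ne n 0 with rfl | hn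
  · simpa using (norm_nonneg _).trans (hg x)
  calc ‖birkhoffAverage 𝕜 f g n x‖ ≤ (n : ℝ)⁻¹ * ∑ m ∈ range n, ‖g (f^[m] x)‖ := by
        rw [birkhoffAverage, birkhoffSum, norm_smul, norm_inv, RCLike.norm_natCast]
        gcongr
        exact norm_sum_le _ _
    _ ≤ (n : ℝ)⁻¹ * (n * C) := by
        gcongr
        simpa using sum_le_card_nsmul (range n) _ C fun m _ ↦ hg _
    _ = C := by field_simp

lemma tendsto_succ_div_natCast {u : ℕ → ℝ} {L : ℝ}
    (h : Tendsto (fun n : ℕ ↦ u n / n) atTop (𝓝 L)) :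
    Tendsto (fun n : ℕ ↦ u (n + 1) / n) atTop (𝓝 L) := by
  have hratio : Tendsto (fun n : ℕ ↦ ((n : ℝ) + 1) / n) atTop (𝓝 1) := by
    have := tendsto_const_nhds (x := (1 : ℝ)).add tendsto_one_div_atTop_nhds_zero_nat
    rw [add_zero] at this
    refine this.congr' ((eventually_ne_atTop 0).mono fun n hn ↦ ?_)
    field_simp
  refine (mul_one L ▸ ((tendsto_add_atTop_iff_nat 1).2 h).mul hratio).congr fun n ↦ ?_
  rw [Nat.cast_succ, div_mul_div_cancel₀ n.cast_add_one_ne_zero]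

namespace AddCircle

variable {T : ℝ}

lemma birkhoffSum_add_right_fourier (a x : AddCircle T) (k : ℤ) (n : ℕ) :
    birkhoffSum (· + a) (fourier k) n x = fourier k x * ∑ m ∈ range n, fourier k a ^ m := by
  simp only [birkhoffSum, add_right_iterate_apply, mul_sum]
  refine sum_congr rfl fun m _ ↦ ?_
  rw [fourier_apply, fourier_apply, fourier_apply, smul_add, toCircle_add, smul_comm k m a,
    toCircle_nsmul, Circle.coe_mul, Circle.coe_pow]

variable [hT : Fact (0 < T)] {a : AddCircle T}

lemma fourier_apply_ne_one (ha : ¬IsOfFinAddOrder a) {k : ℤ} (hk : k ≠ 0) : fourier k a ≠ 1 := by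
  intro h
  refine ha (isOfFinAddOrder_iff_zsmul_eq_zero.2 ⟨k, hk, injective_toCircle hT.out.ne' ?_⟩)
  rwa [toCircle_zero, ← Circle.coe_eq_one, ← fourier_apply]

lemma integral_fourier (k : ℤ) :
    ∫ y, fourier k y ∂haarAddCircle (T := T) = if k = 0 then 1 else 0 := by
  simpa [fourierCoeff, Pi.single_apply, eq_comm] using
    congr_fun (fourierCoeff_fourier (T := T) k) 0

theorem tendsto_birkhoffAverage_fourier (ha : ¬IsOfFinAddOrder a) (k : ℤ) (x : AddCircle T) :
    Tendsto (birkhoffAverage ℂ (· + a) (fourier k) · x) atTop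
      (𝓝 (∫ y, fourier k y ∂haarAddCircle (T := T))) := by
  rw [integral_fourier]
  split_ifs with hk
  · subst hk
    refine tendsto_const_nhds.congr' ((eventually_ne_atTop 0).mono fun n hn ↦ ?_)
    simp [birkhoffAverage, birkhoffSum, hn]
  have hnorm (y : AddCircle T) : ‖fourier k y‖ = 1 := by
    rw [fourier_apply]
    exact Circle.norm_coe _
  set c := fourier k a
  have hc : c ≠ 1 := fourier_apply_ne_one ha hk
  have hsum (n : ℕ) : ‖birkhoffSum (· + a) (fourier k) n x‖ ≤ 2 / ‖c - 1‖ := by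
    rw [birkhoffSum_add_right_fourier, geom_sum_eq hc, norm_mul, norm_div, hnorm, one_mul]
    gcongr
    calc ‖c ^ n - 1‖ ≤ ‖c ^ n‖ + ‖(1 : ℂ)‖ := norm_sub_le _ _
      _ = 2 := by rw [norm_pow, hnorm, one_pow, norm_one]; norm_num
  refine squeeze_zero_norm (fun n ↦ ?_) (tendsto_const_div_atTop_nhds_zero_nat (2 / ‖c - 1‖))
  rw [birkhoffAverage, norm_smul, norm_inv, RCLike.norm_natCast, ← div_eq_inv_mul]
  gcongr
  exact hsum n

lemma integrable_haarAddCircle (g : C(AddCircle T, ℂ)) : Integrable g (haarAddCircle (T := T)) :=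
  g.continuous.integrable_of_hasCompactSupport (.of_compactSpace g)

lemma lipschitzWith_integral_haarAddCircle :
    LipschitzWith 1 fun g : C(AddCircle T, ℂ) ↦ ∫ y, g y ∂haarAddCircle (T := T) := by
  refine LipschitzWith.of_dist_le_mul fun g h ↦ ?_
  rw [NNReal.coe_one, one_mul, dist_eq_norm, dist_eq_norm,
    ← integral_sub (integrable_haarAddCircle g) (integrable_haarAddCircle h)]
  simpa using norm_integral_le_of_norm_le_const (μ := haarAddCircle (T := T))
    (Eventually.of_forall (g - h).norm_coe_le_norm)

theorem tendsto_birkhoffAverage_add_right (ha : ¬IsOfFinAddOrder a) (g : C(AddCircle T, ℂ))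
    (x : AddCircle T) :
    Tendsto (birkhoffAverage ℂ (· + a) g · x) atTop (𝓝 (∫ y, g y ∂haarAddCircle (T := T))) := by
  let S : Submodule ℂ C(AddCircle T, ℂ) :=
    { carrier := {g | Tendsto (birkhoffAverage ℂ (· + a) g · x) atTop
        (𝓝 (∫ y, g y ∂haarAddCircle (T := T)))}
      add_mem' := fun {g h} hg hh ↦ by
        simpa [birkhoffAverage_add, integral_add (integrable_haarAddCircle g)
          (integrable_haarAddCircle h)] using hg.add hh
      zero_mem' := by simp [birkhoffAverage, birkhoffSum]
      smul_mem' := fun c g hg ↦ by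
        simpa [birkhoffAverage, birkhoffSum, ← mul_sum, mul_left_comm _ c, integral_const_mul]
          using hg.const_smul c }
  have hS : IsClosed (S : Set C(AddCircle T, ℂ)) := by
    refine Equicontinuous.isClosed_setOfPred_tendsto ?_
      lipschitzWith_integral_haarAddCircle.continuous
    refine (LipschitzWith.uniformEquicontinuous _ 1 fun n ↦ ?_).equicontinuous
    refine LipschitzWith.of_dist_le_mul fun g h ↦ ?_
    rw [NNReal.coe_one, one_mul, dist_eq_norm, dist_eq_norm,
      ← Pi.sub_apply (birkhoffAverage ℂ _ g n), ← Pi.sub_apply (birkhoffAverage ℂ _ g),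
      ← birkhoffAverage_sub]
    exact norm_birkhoffAverage_le ℂ (g - h).norm_coe_le_norm n x
  have hspan : Submodule.span ℂ (Set.range fourier) ≤ S :=
    Submodule.span_le.2 (Set.range_subset_iff.2 fun k ↦ tendsto_birkhoffAverage_fourier ha k x)
  exact (span_fourier_closure_eq_top.symm.le.trans
    (Submodule.topologicalClosure_minimal _ hspan hS)) Submodule.mem_top

lemma haarAddCircle_sphere_eq_zero (z : AddCircle T) (r : ℝ) :
    haarAddCircle (Metric.sphere z r) = 0 := by
  have h := (ae_eq_set.1 (closedBall_ae_eq_ball (x := z) (ε := r))).1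
  rw [Metric.closedBall_sdiff_ball, volume_eq_smul_haarAddCircle, Measure.smul_apply,
    smul_eq_mul, mul_eq_zero] at h
  exact h.resolve_left (by simpa using hT.out)

lemma haarAddCircle_real_ball (z : AddCircle T) {r : ℝ} (hr₀ : 0 ≤ r) (hr : r ≤ T / 2) :
    (haarAddCircle (T := T)).real (Metric.ball z r) = 2 * r / T := by
  have h := measure_congr (closedBall_ae_eq_ball (x := z) (ε := r))
  rw [volume_closedBall, min_eq_right (by linarith), volume_eq_smul_haarAddCircle,
    Measure.smul_apply, smul_eq_mul] at h
  have h' := congrArg ENNReal.toReal h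
  rw [ENNReal.toReal_ofReal (by positivity), ENNReal.toReal_mul,
    ENNReal.toReal_ofReal hT.out.le] at h'
  rw [measureReal_def, eq_div_iff hT.out.ne', h', mul_comm]

end AddCircle

/-- Weyl equidistribution for the irrational rotation: for the
rotation `f` of `S¹ = ℝ/2πℤ` by an angle `α` irrationally related to `2π`, the
frequency of visits of the orbit of `x` to the `ε`-ball around `z` equals the
normalized length `ε/π` of that ball (for `0 < ε < π`). -/
theorem irrational_rotation_equidistribution
    (α : ℝ) (hirr : ∀ q : ℚ, α ≠ (q : ℝ) * (2 * π))
    (x z : AddCircle (2 * π)) (ε : ℝ) (hε0 : 0 < ε) (hεπ : ε < π) :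
    Tendsto
      (fun N : ℕ =>
        (((Finset.range (N + 1)).filter
            (fun m => dist ((fun y => y + (α : AddCircle (2 * π)))^[m] x) z < ε)).card : ℝ) / N)
      atTop (nhds (ε / π)) := by
  have : Fact (0 < 2 * π) := ⟨two_pi_pos⟩
  have ha : ¬IsOfFinAddOrder (α : AddCircle (2 * π)) :=
    AddCircle.not_isOfFinAddOrder_iff_forall_rat_ne_div.2 fun q hq ↦
      hirr q (by rw [hq, div_mul_cancel₀ _ two_pi_pos.ne'])
  have hfreq := tendsto_card_filter_iterate_mem_div
    (fun g ↦ AddCircle.tendsto_birkhoffAverage_add_right ha g.toContinuousMap x)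
    (measure_mono_null Metric.frontier_ball_subset_sphere (AddCircle.haarAddCircle_sphere_eq_zero z ε))
  rw [AddCircle.haarAddCircle_real_ball z hε0.le (by linarith), mul_div_mul_left _ _ two_ne_zero]
    at hfreq
  simpa only [Metric.mem_ball] using tendsto_succ_div_natCast hfreq
end
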